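/- Let q(x) = (3/2)·x(3 − x(3 − x)) / (3 − x(3 − x(3 − x)))². Then for every x ∈ [0,1], q(x) = ∫_{[0,1]³} 1{ξ₂ < min(ξ₁, ξ₃, x)} · (q(x) + q(ξ₁) + q(ξ₂) + q(ξ₃)) dξ₁dξ₂dξ₃. Consequently the function g(x₁,x₂,x₃,x₄) = Σ_{ν=1}^4 q(x_ν) on [0,1]⁴ satisfies g(x) = Σ_{ν=1}^4 ∫_{[0,1]³} 1{ξ₂ < min(ξ₁, ξ₃, x_{ν+2})} g(x^{ν,ξ}) dξ₁dξ₂dξ₃, where x^{ν,ξ} denotes x with coordinates ν−1, ν, ν+1 (mod 4) replaced by ξ₁, ξ₂, ξ₃; i.e., g is a fixed point of the one-step density recursion of the four-species Bak–Sneppen model. -/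

import Mathlib

/-!
Writing `u = 1 - t`, one has `q(t) = (3/2)(1 - u³)/(2 + u³)²`, whose tail integral is explicit:
`∫ₛ¹ q = 3(1 - s)/(4(2 + (1 - s)³))`. Integrating out `ξ₃`, and then (after Fubini) `ξ₁`, over the
region `ξ₂ < ξ₁, ξ₃` leaves an integral over `ξ₂ ∈ (0, x)` of `(A + q)(1 - s)² + 2(1 - s)∫ₛ¹ q`,
which has the elementary primitive `-A(1 - s)³/3 + 3/(2(2 + (1 - s)³))`; for `A = q(x)` the
result is `q(x)`. In the four-species recursion the `ν`-th summand sees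
`g(x^{ν,ξ}) = q(x_{ν+2}) + q(ξ₁) + q(ξ₂) + q(ξ₃)`, so it equals `q(x_{ν+2})`.
-/

open MeasureTheory

/-- The limiting single-site density `q` of the four-species Bak–Sneppen model. -/
noncomputable def bsQ (x : ℝ) : ℝ :=
  (3 / 2) * (x * (3 - x * (3 - x))) / (3 - x * (3 - x * (3 - x))) ^ 2

open Set

lemma bsQ_eq (t : ℝ) : bsQ t = 3 / 2 * (1 - (1 - t) ^ 3) / (2 + (1 - t) ^ 3) ^ 2 := by
  unfold bsQ; ring

lemma two_add_one_sub_pow_three_pos {t : ℝ} (ht : t ≤ 1) : 0 < 2 + (1 - t) ^ 3 := by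
  have := sub_nonneg.2 ht
  positivity

noncomputable def bsTail (t : ℝ) : ℝ := 3 * (1 - t) / (4 * (2 + (1 - t) ^ 3))

lemma continuousOn_bsQ : ContinuousOn bsQ (Iic 1) := by
  simp_rw [funext bsQ_eq]
  exact ContinuousOn.div (by fun_prop) (by fun_prop)
    fun t ht => (pow_pos (two_add_one_sub_pow_three_pos ht) 2).ne'

lemma continuousOn_bsTail : ContinuousOn bsTail (Iic 1) :=
  ContinuousOn.div (by fun_prop) (by fun_prop)
    fun t ht => (mul_pos four_pos (two_add_one_sub_pow_three_pos ht)).ne'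

lemma hasDerivAt_bsTail {t : ℝ} (ht : t ≤ 1) : HasDerivAt bsTail (-bsQ t) t := by
  have hD := (two_add_one_sub_pow_three_pos ht).ne'
  have hu : HasDerivAt (fun t : ℝ => 1 - t) (-1) t := (hasDerivAt_id t).const_sub 1
  have := (hu.const_mul 3).fun_div ((hu.fun_pow 3).const_add 2 |>.const_mul 4) (by positivity)
  refine this.congr_deriv ?_
  rw [bsQ_eq]; field_simp; ring

lemma integral_ite_const_lt {f : ℝ → ℝ} {a b c : ℝ} (hc : c ∈ Icc a b) :
    ∫ t in a..b, (if c < t then f t else 0) = ∫ t in c..b, f t := by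
  have hind : (fun t => if c < t then f t else 0) = (Ioi c).indicator f := by
    ext t; simp [indicator_apply]
  rw [hind, intervalIntegral.integral_of_le (hc.1.trans hc.2), intervalIntegral.integral_of_le hc.2,
    setIntegral_indicator measurableSet_Ioi, Ioc_inter_Ioi, max_eq_right hc.1]

lemma integral_ite_lt_const {f : ℝ → ℝ} {a b c : ℝ} (hc : c ∈ Icc a b) :
    ∫ t in a..b, (if t < c then f t else 0) = ∫ t in a..c, f t := by
  have hind : (fun t => if t < c then f t else 0) = (Iio c).indicator f := by
    ext t; simp [indicator_apply]
  have hset : Ioc a b ∩ Iio c = Ioo a c := by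
    ext t
    simp only [mem_inter_iff, mem_Ioc, mem_Iio, mem_Ioo]
    constructor
    · exact fun h => ⟨h.1.1, h.2⟩
    · exact fun h => ⟨⟨h.1, h.2.le.trans hc.2⟩, h.2⟩
  rw [hind, intervalIntegral.integral_of_le (hc.1.trans hc.2), intervalIntegral.integral_of_le hc.1,
    setIntegral_indicator measurableSet_Iio, hset, integral_Ioc_eq_integral_Ioo]

lemma intervalIntegrable_bsQ {a b : ℝ} (ha : a ≤ 1) (hb : b ≤ 1) :
    IntervalIntegrable bsQ volume a b :=
  (continuousOn_bsQ.mono fun _ ht => ht.2.trans (sup_le ha hb)).intervalIntegrable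

lemma integral_bsQ {a : ℝ} (ha : a ≤ 1) : ∫ t in a..1, bsQ t = bsTail a := by
  rw [intervalIntegral.integral_eq_sub_of_hasDerivAt (f := -bsTail)
    (fun t ht => by simpa using (hasDerivAt_bsTail (ht.2.trans (sup_le ha le_rfl))).neg)
    (intervalIntegrable_bsQ ha le_rfl)]
  simp [bsTail]

lemma integral_ite_const_lt_add_mul_bsQ {s : ℝ} (hs : s ∈ Icc (0 : ℝ) 1) (c r : ℝ) :
    ∫ t in (0 : ℝ)..1, (if s < t then c + r * bsQ t else 0) = c * (1 - s) + r * bsTail s := by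
  rw [integral_ite_const_lt hs, intervalIntegral.integral_add intervalIntegrable_const
    ((intervalIntegrable_bsQ hs.2 le_rfl).const_mul r), intervalIntegral.integral_const_mul,
    integral_bsQ hs.2, intervalIntegral.integral_const, smul_eq_mul, mul_comm]

lemma intervalIntegral_integral_swap {E : Type*} [NormedAddCommGroup E] [NormedSpace ℝ E]
    {f : ℝ → ℝ → E} {a b c d : ℝ} (hab : a ≤ b) (hcd : c ≤ d)
    (hf : IntegrableOn (Function.uncurry f) (Ioc a b ×ˢ Ioc c d)) :
    ∫ x in a..b, ∫ y in c..d, f x y = ∫ y in c..d, ∫ x in a..b, f x y := by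
  simp only [intervalIntegral.integral_of_le hab, intervalIntegral.integral_of_le hcd]
  apply integral_integral_swap
  rwa [Measure.prod_restrict, ← Measure.volume_eq_prod]

noncomputable def bsInnerIntegral (A x ξ₁ ξ₂ : ℝ) : ℝ :=
  if ξ₂ < ξ₁ ∧ ξ₂ < x then (A + bsQ ξ₁ + bsQ ξ₂) * (1 - ξ₂) + bsTail ξ₂ else 0

lemma integral_ite_eq_bsInnerIntegral (A x ξ₁ : ℝ) {ξ₂ : ℝ} (h₂ : ξ₂ ∈ Icc (0 : ℝ) 1) :
    ∫ ξ₃ in (0 : ℝ)..1, (if ξ₂ < min ξ₁ (min ξ₃ x) then A + bsQ ξ₁ + bsQ ξ₂ + bsQ ξ₃ else 0)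
      = bsInnerIntegral A x ξ₁ ξ₂ := by
  unfold bsInnerIntegral
  split_ifs with h
  · refine (intervalIntegral.integral_congr fun ξ₃ _ => ?_).trans
      ((integral_ite_const_lt_add_mul_bsQ h₂ (A + bsQ ξ₁ + bsQ ξ₂) 1).trans (by ring))
    simp only [lt_min_iff, h.1, h.2, true_and, and_true, one_mul]
  · refine (intervalIntegral.integral_congr fun ξ₃ _ => if_neg ?_).trans
      intervalIntegral.integral_zero
    simp only [lt_min_iff]
    tauto

lemma integrableOn_bsInnerIntegral (A x : ℝ) :
    IntegrableOn (Function.uncurry (bsInnerIntegral A x)) (Ioc 0 1 ×ˢ Ioc 0 1) := by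
  have hS : MeasurableSet {p : ℝ × ℝ | p.2 < p.1 ∧ p.2 < x} :=
    (measurableSet_lt measurable_snd measurable_fst).inter
      (measurableSet_lt measurable_snd measurable_const)
  have hcont : ContinuousOn
      (fun p : ℝ × ℝ => (A + bsQ p.1 + bsQ p.2) * (1 - p.2) + bsTail p.2) (Icc 0 1 ×ˢ Icc 0 1) := by
    have h₁ : ContinuousOn (fun p : ℝ × ℝ => bsQ p.1) (Icc 0 1 ×ˢ Icc 0 1) :=
      continuousOn_bsQ.comp continuousOn_fst fun _ hp => hp.1.2
    have h₂ : ContinuousOn (fun p : ℝ × ℝ => bsQ p.2) (Icc 0 1 ×ˢ Icc 0 1) :=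
      continuousOn_bsQ.comp continuousOn_snd fun _ hp => hp.2.2
    have h₃ : ContinuousOn (fun p : ℝ × ℝ => bsTail p.2) (Icc 0 1 ×ˢ Icc 0 1) :=
      continuousOn_bsTail.comp continuousOn_snd fun _ hp => hp.2.2
    exact (((continuousOn_const.add h₁).add h₂).mul (by fun_prop)).add h₃
  have : Function.uncurry (bsInnerIntegral A x) = {p : ℝ × ℝ | p.2 < p.1 ∧ p.2 < x}.indicator
      fun p => (A + bsQ p.1 + bsQ p.2) * (1 - p.2) + bsTail p.2 := by
    ext ⟨ξ₁, ξ₂⟩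
    simp only [Function.uncurry_apply_pair, bsInnerIntegral, indicator_apply, mem_ofPred_eq]
  rw [this]
  exact ((hcont.integrableOn_compact (isCompact_Icc.prod isCompact_Icc)).mono_set
    (prod_mono Ioc_subset_Icc_self Ioc_subset_Icc_self)).indicator hS

lemma integral_bsInnerIntegral_fst (A x : ℝ) {s : ℝ} (hs : s ∈ Icc (0 : ℝ) 1) :
    ∫ t in (0 : ℝ)..1, bsInnerIntegral A x t s
      = if s < x then (A + bsQ s) * (1 - s) ^ 2 + 2 * (1 - s) * bsTail s else 0 := by
  split_ifs with h
  · rw [intervalIntegral.integral_congr (g := fun t => if s < t then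
        ((A + bsQ s) * (1 - s) + bsTail s) + (1 - s) * bsQ t else 0) fun t _ => ?_,
      integral_ite_const_lt_add_mul_bsQ hs]
    · ring
    · simp only [bsInnerIntegral, h, and_true]
      split_ifs <;> ring
  · refine (intervalIntegral.integral_congr fun t _ => if_neg ?_).trans
      intervalIntegral.integral_zero
    exact fun h' => h h'.2

noncomputable def bsPotential (A t : ℝ) : ℝ := -A * (1 - t) ^ 3 / 3 + 3 / (2 * (2 + (1 - t) ^ 3))

lemma hasDerivAt_bsPotential (A : ℝ) {t : ℝ} (ht : t ≤ 1) :
    HasDerivAt (bsPotential A) ((A + bsQ t) * (1 - t) ^ 2 + 2 * (1 - t) * bsTail t) t := by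
  have hD := (two_add_one_sub_pow_three_pos ht).ne'
  have hu : HasDerivAt (fun t : ℝ => 1 - t) (-1) t := (hasDerivAt_id t).const_sub 1
  have := ((hu.fun_pow 3).const_mul (-A) |>.div_const 3).fun_add
    ((hasDerivAt_const t (3 : ℝ)).fun_div ((hu.fun_pow 3).const_add 2 |>.const_mul 2)
      (by positivity))
  refine this.congr_deriv ?_
  rw [bsQ_eq, bsTail]; field_simp; ring

lemma integral_bsPotential_deriv (A : ℝ) {x : ℝ} (hx : x ∈ Icc (0 : ℝ) 1) :
    ∫ s in (0 : ℝ)..x, ((A + bsQ s) * (1 - s) ^ 2 + 2 * (1 - s) * bsTail s)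
      = bsPotential A x - bsPotential A 0 := by
  have hsub : uIcc 0 x ⊆ Iic (1 : ℝ) := fun _ hs => hs.2.trans (sup_le zero_le_one hx.2)
  refine intervalIntegral.integral_eq_sub_of_hasDerivAt
    (fun s hs => hasDerivAt_bsPotential A (hsub hs)) (ContinuousOn.intervalIntegrable ?_)
  refine ContinuousOn.mono ?_ hsub
  exact ((continuousOn_const.add continuousOn_bsQ).mul (by fun_prop)).add
    ((by fun_prop : ContinuousOn (fun s : ℝ => 2 * (1 - s)) _).mul continuousOn_bsTail)

lemma integral_ite_lt_min_eq_bsPotential_sub (A : ℝ) {x : ℝ} (hx : x ∈ Icc (0 : ℝ) 1) :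
    ∫ ξ₁ in (0 : ℝ)..1, ∫ ξ₂ in (0 : ℝ)..1, ∫ ξ₃ in (0 : ℝ)..1,
      (if ξ₂ < min ξ₁ (min ξ₃ x) then A + bsQ ξ₁ + bsQ ξ₂ + bsQ ξ₃ else 0)
      = bsPotential A x - bsPotential A 0 := by
  have hunit : uIcc (0 : ℝ) 1 = Icc 0 1 := uIcc_of_le zero_le_one
  calc _ = ∫ ξ₁ in (0 : ℝ)..1, ∫ ξ₂ in (0 : ℝ)..1, bsInnerIntegral A x ξ₁ ξ₂ :=
        intervalIntegral.integral_congr fun ξ₁ _ => intervalIntegral.integral_congr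
          fun ξ₂ h₂ => integral_ite_eq_bsInnerIntegral A x ξ₁ (hunit ▸ h₂)
    _ = ∫ ξ₂ in (0 : ℝ)..1, ∫ ξ₁ in (0 : ℝ)..1, bsInnerIntegral A x ξ₁ ξ₂ :=
        intervalIntegral_integral_swap zero_le_one zero_le_one (integrableOn_bsInnerIntegral A x)
    _ = ∫ s in (0 : ℝ)..1,
          (if s < x then (A + bsQ s) * (1 - s) ^ 2 + 2 * (1 - s) * bsTail s else 0) :=
        intervalIntegral.integral_congr fun s hs => integral_bsInnerIntegral_fst A x (hunit ▸ hs)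
    _ = bsPotential A x - bsPotential A 0 := by
        rw [integral_ite_lt_const hx, integral_bsPotential_deriv A hx]

lemma bsPotential_sub_bsPotential_zero {x : ℝ} (hx : x ≤ 1) :
    bsPotential (bsQ x) x - bsPotential (bsQ x) 0 = bsQ x := by
  have hD := (two_add_one_sub_pow_three_pos hx).ne'
  simp only [bsPotential, bsQ_eq]
  field_simp
  ring

lemma sum_update_three {α M : Type*} [AddCommMonoid M] (f : α → M) (x : Fin 4 → α)
    (ν : Fin 4) (a b c : α) :
    ∑ μ, f (Function.update (Function.update (Function.update x (ν - 1) a) ν b) (ν + 1) c μ)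
      = f (x (ν + 2)) + f a + f b + f c := by
  fin_cases ν <;>
    simp only [Fin.zero_eta, Fin.mk_one, Fin.reduceFinMk, Fin.isValue, zero_sub, zero_add,
      sub_self, Fin.reduceSub, Fin.reduceAdd, Fin.reduceEq, Fin.sum_univ_four,
      Function.update_apply, zero_ne_one, one_ne_zero, ↓reduceIte] <;>
    abel

theorem bsQ_eq_integral {x : ℝ} (hx : x ∈ Icc (0 : ℝ) 1) :
    bsQ x = ∫ ξ₁ in (0:ℝ)..1, ∫ ξ₂ in (0:ℝ)..1, ∫ ξ₃ in (0:ℝ)..1,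
      if ξ₂ < min ξ₁ (min ξ₃ x) then bsQ x + bsQ ξ₁ + bsQ ξ₂ + bsQ ξ₃ else 0 := by
  rw [integral_ite_lt_min_eq_bsPotential_sub (bsQ x) hx, bsPotential_sub_bsPotential_zero hx.2]

theorem bs4_stationary_fixed_point :
    (∀ x ∈ Set.Icc (0 : ℝ) 1,
      bsQ x = ∫ ξ₁ in (0:ℝ)..1, ∫ ξ₂ in (0:ℝ)..1, ∫ ξ₃ in (0:ℝ)..1,
        if ξ₂ < min ξ₁ (min ξ₃ x) then bsQ x + bsQ ξ₁ + bsQ ξ₂ + bsQ ξ₃ else 0)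
    ∧ ∀ x : Fin 4 → ℝ, (∀ ν, x ν ∈ Set.Icc (0 : ℝ) 1) →
        (∑ ν : Fin 4, bsQ (x ν))
          = ∑ ν : Fin 4, ∫ ξ₁ in (0:ℝ)..1, ∫ ξ₂ in (0:ℝ)..1, ∫ ξ₃ in (0:ℝ)..1,
              if ξ₂ < min ξ₁ (min ξ₃ (x (ν + 2))) then
                ∑ μ : Fin 4,
                  bsQ ((Function.update (Function.update
                    (Function.update x (ν - 1) ξ₁) ν ξ₂) (ν + 1) ξ₃) μ)
              else 0 := by
  refine ⟨fun x hx => bsQ_eq_integral hx, fun x hx => ?_⟩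
  simp only [sum_update_three]
  rw [← Equiv.sum_comp (Equiv.addRight (2 : Fin 4))]
  exact Finset.sum_congr rfl fun ν _ => bsQ_eq_integral (hx (ν + 2))
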